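/- For β ∈ (0, 1/2), with a = 2β + 1/(2β) − 2 > 0, the integral ∫_{-2}^{2} log(2 + a − x) · (2 − x²)/√(4 − x²) dx equals 4πβ². -/

import Mathlib

open MeasureTheory Real Set

/-!
Write `b = r + r⁻¹` and `c = r⁻¹ - r`, so that `c ^ 2 = b ^ 2 - 4`. The weight
`(2 - x ^ 2) / √(4 - x ^ 2)` is the derivative of `x √(4 - x ^ 2) / 2`; integrating by parts and
substituting `x = 2 sin θ`, `t = tan (θ / 2)` leaves a rational integral in `t`, which yields the
elementary primitive `logSubPrimitive b c` below. At `x = ±2` the square roots vanish, the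
`arcsin` terms give `±π / 2`, and the two `arctan` values are complementary because
`(b - 2) / c * ((b + 2) / c) = 1`; altogether the integral is `π / 2 * (b ^ 2 - 2 - b c) = π r ^ 2`.
The integrand is integrable since it is a continuous multiple of `1 / √(4 - x ^ 2)`, the
nonnegative derivative of `arcsin (x / 2)`.
-/

variable {b c x : ℝ}

lemma hasDerivAt_sqrt_four_sub_sq (h : 0 < 4 - x ^ 2) :
    HasDerivAt (fun x => √(4 - x ^ 2)) (-x / √(4 - x ^ 2)) x := by
  have h1 : HasDerivAt (fun x : ℝ => 4 - x ^ 2) (-(2 * x)) x := by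
    simpa using (hasDerivAt_pow 2 x).const_sub 4
  refine ((hasDerivAt_sqrt h.ne').comp x h1).congr_deriv ?_
  have := (sqrt_pos.mpr h).ne'
  field_simp

lemma hasDerivAt_mul_sqrt_four_sub_sq (h : 0 < 4 - x ^ 2) :
    HasDerivAt (fun x => x * √(4 - x ^ 2)) ((4 - 2 * x ^ 2) / √(4 - x ^ 2)) x := by
  have hs : 0 < √(4 - x ^ 2) := sqrt_pos.mpr h
  refine ((hasDerivAt_id x).mul (hasDerivAt_sqrt_four_sub_sq h)).congr_deriv ?_
  field_simp
  rw [sq_sqrt h.le, id_eq]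
  ring

lemma hasDerivAt_arcsin_half (h : 0 < 4 - x ^ 2) :
    HasDerivAt (fun x => arcsin (x / 2)) (1 / √(4 - x ^ 2)) x := by
  have h1 : x / 2 ≠ -1 := fun h' => by nlinarith
  have h2 : x / 2 ≠ 1 := fun h' => by nlinarith
  refine ((hasDerivAt_arcsin h1 h2).comp x ((hasDerivAt_id x).div_const 2)).congr_deriv ?_
  rw [show 1 - (x / 2) ^ 2 = (4 - x ^ 2) / 2 ^ 2 by ring, sqrt_div' _ (by positivity),
    sqrt_sq zero_le_two]
  have := (sqrt_pos.mpr h).ne'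
  field_simp

-- With `x = 2 sin θ`, this is `tan (θ / 2)`.
lemma hasDerivAt_div_two_add_sqrt (h : 0 < 4 - x ^ 2) :
    HasDerivAt (fun x => x / (2 + √(4 - x ^ 2)))
      (2 / (√(4 - x ^ 2) * (2 + √(4 - x ^ 2)))) x := by
  have hs : 0 < √(4 - x ^ 2) := sqrt_pos.mpr h
  have hs2 : √(4 - x ^ 2) ^ 2 = 4 - x ^ 2 := sq_sqrt h.le
  refine ((hasDerivAt_id x).div ((hasDerivAt_sqrt_four_sub_sq h).const_add 2)
    (by positivity)).congr_deriv ?_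
  field_simp
  simp only [id_eq]
  linear_combination hs2

lemma hasDerivAt_arctan_tan_half (hc : c ≠ 0) (hc2 : c ^ 2 = b ^ 2 - 4) (h : 0 < 4 - x ^ 2) :
    HasDerivAt (fun x => arctan ((b * (x / (2 + √(4 - x ^ 2))) - 2) / c))
      (c / (2 * √(4 - x ^ 2) * (b - x))) x := by
  have hs : 0 < √(4 - x ^ 2) := sqrt_pos.mpr h
  have hs2 : √(4 - x ^ 2) ^ 2 = 4 - x ^ 2 := sq_sqrt h.le
  have hbx : b - x ≠ 0 := fun hbx => by
    obtain rfl : b = x := by linarith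
    nlinarith [sq_nonneg c]
  have hb : b ≠ 0 := by rintro rfl; nlinarith [sq_nonneg c]
  refine ((hasDerivAt_arctan _).comp x ((((hasDerivAt_div_two_add_sqrt h).const_mul b).sub_const
    2).div_const c)).congr_deriv ?_
  set s := √(4 - x ^ 2)
  have hsum : 1 + ((b * (x / (2 + s)) - 2) / c) ^ 2 = 4 * b * (b - x) / ((2 + s) * c ^ 2) := by
    field_simp
    linear_combination b ^ 2 * hs2 + (2 + s) ^ 2 * hc2
  rw [hsum]
  field_simp
  ring

noncomputable def logSubPrimitive (b c x : ℝ) : ℝ :=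
  x * √(4 - x ^ 2) / 2 * log (b - x) - x * √(4 - x ^ 2) / 4 + (b ^ 2 / 2 - 1) * arcsin (x / 2)
    - b / 2 * √(4 - x ^ 2) - b * c * arctan ((b * (x / (2 + √(4 - x ^ 2))) - 2) / c)

lemma hasDerivAt_logSubPrimitive (hc : c ≠ 0) (hc2 : c ^ 2 = b ^ 2 - 4) (h : 0 < 4 - x ^ 2) :
    HasDerivAt (logSubPrimitive b c) (log (b - x) * ((2 - x ^ 2) / √(4 - x ^ 2))) x := by
  have hs : 0 < √(4 - x ^ 2) := sqrt_pos.mpr h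
  have hs2 : √(4 - x ^ 2) ^ 2 = 4 - x ^ 2 := sq_sqrt h.le
  have hbx : b - x ≠ 0 := fun hbx => by
    obtain rfl : b = x := by linarith
    nlinarith [sq_nonneg c]
  have hlog : HasDerivAt (fun x => log (b - x)) (-1 / (b - x)) x := by
    simpa using ((hasDerivAt_id x).const_sub b).log hbx
  have hxs := hasDerivAt_mul_sqrt_four_sub_sq h
  refine (((((hxs.div_const 2).mul hlog).sub (hxs.div_const 4)).add
    ((hasDerivAt_arcsin_half h).const_mul _)).sub
    ((hasDerivAt_sqrt_four_sub_sq h).const_mul _)).sub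
    ((hasDerivAt_arctan_tan_half hc hc2 h).const_mul _) |>.congr_deriv ?_
  field_simp
  linear_combination -4 * x * hs2 - 4 * b * hc2

lemma continuousOn_logSubPrimitive (hb : 2 < b) :
    ContinuousOn (logSubPrimitive b c) (Icc (-2) 2) := by
  have hlog : ContinuousOn (fun x => log (b - x)) (Icc (-2) 2) :=
    ContinuousOn.log (by fun_prop) fun x hx => by linarith [hx.2]
  have harcsin : Continuous fun x : ℝ => arcsin (x / 2) := continuous_arcsin.comp (by fun_prop)
  have harctan : Continuous fun x => arctan ((b * (x / (2 + √(4 - x ^ 2))) - 2) / c) :=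
    continuous_arctan.comp <| by
      have : ∀ x : ℝ, 2 + √(4 - x ^ 2) ≠ 0 := fun x => by positivity
      fun_prop (disch := assumption)
  refine ((((ContinuousOn.mul ?_ hlog).sub ?_).add ?_).sub ?_).sub ?_ <;>
    exact Continuous.continuousOn (by fun_prop)

lemma logSubPrimitive_two_sub_neg_two (hb : 2 < b) (hc : 0 < c) (hc2 : c ^ 2 = b ^ 2 - 4) :
    logSubPrimitive b c 2 - logSubPrimitive b c (-2) = π / 2 * (b ^ 2 - 2 - b * c) := by
  have harctan : arctan ((b - 2) / c) + arctan ((b + 2) / c) = π / 2 := by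
    have hinv : ((b - 2) / c)⁻¹ = (b + 2) / c := by
      rw [inv_div, div_eq_div_iff (by linarith) hc.ne']
      linear_combination hc2
    rw [← hinv, arctan_inv_of_pos (div_pos (by linarith) hc)]
    ring
  simp only [logSubPrimitive]
  norm_num [arcsin_neg_one, show (-b - 2) / c = -((b + 2) / c) by ring, arctan_neg]
  linear_combination -b * c * harctan

lemma intervalIntegrable_one_div_sqrt_four_sub_sq :
    IntervalIntegrable (fun x => 1 / √(4 - x ^ 2)) volume (-2) 2 := by
  refine intervalIntegral.intervalIntegrable_deriv_of_nonneg (g := fun x => arcsin (x / 2))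
    (continuous_arcsin.comp (by fun_prop)).continuousOn (fun x hx => ?_) (fun x _ => by positivity)
  rw [min_eq_left (by norm_num), max_eq_right (by norm_num)] at hx
  exact hasDerivAt_arcsin_half (by nlinarith [hx.1, hx.2])

lemma intervalIntegrable_log_sub_mul (hb : 2 < b) :
    IntervalIntegrable (fun x => log (b - x) * ((2 - x ^ 2) / √(4 - x ^ 2))) volume (-2) 2 := by
  have hcont : ContinuousOn (fun x => log (b - x) * (2 - x ^ 2)) (uIcc (-2) 2) := by
    rw [uIcc_of_le (by norm_num)]
    exact (ContinuousOn.log (by fun_prop) fun x hx => by linarith [hx.2]).mul (by fun_prop)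
  convert intervalIntegrable_one_div_sqrt_four_sub_sq.continuousOn_mul hcont using 2
  ring

theorem integral_log_sub_mul (hb : 2 < b) (hc : 0 < c) (hc2 : c ^ 2 = b ^ 2 - 4) :
    ∫ x in (-2 : ℝ)..2, log (b - x) * ((2 - x ^ 2) / √(4 - x ^ 2))
      = π / 2 * (b ^ 2 - 2 - b * c) := by
  rw [intervalIntegral.integral_eq_sub_of_hasDerivAt_of_le (by norm_num)
    (continuousOn_logSubPrimitive hb)
    (fun x hx => hasDerivAt_logSubPrimitive hc.ne' hc2 (by nlinarith [hx.1, hx.2]))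
    (intervalIntegrable_log_sub_mul hb), logSubPrimitive_two_sub_neg_two hb hc hc2]

theorem integral_log_add_inv_sub_mul {r : ℝ} (hr0 : 0 < r) (hr1 : r < 1) :
    ∫ x in (-2 : ℝ)..2, log (r + r⁻¹ - x) * ((2 - x ^ 2) / √(4 - x ^ 2)) = π * r ^ 2 := by
  have hr : r * r⁻¹ = 1 := mul_inv_cancel₀ hr0.ne'
  have hb : 2 < r + r⁻¹ := by nlinarith [one_lt_inv_iff₀.mpr ⟨hr0, hr1⟩]
  have hc : 0 < r⁻¹ - r := by nlinarith [one_lt_inv_iff₀.mpr ⟨hr0, hr1⟩]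
  rw [integral_log_sub_mul hb hc (by linear_combination -4 * hr)]
  linear_combination π * hr

theorem stmt_4 (β : ℝ) (hβ0 : 0 < β) (hβ : β < 1/2) :
    ∫ x in (-2:ℝ)..2,
        Real.log (2 + (2*β + 1/(2*β) - 2) - x) * ((2 - x^2)/Real.sqrt (4 - x^2))
      = 4*Real.pi*β^2 := by
  have h := integral_log_add_inv_sub_mul (r := 2 * β) (by linarith) (by linarith)
  simp only [one_div, add_sub_cancel] at h ⊢
  rw [h]
  ring
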